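/- Let u_max > 0, ξ > 0, p₁ > 0, p₂ > 0, γ ≥ 1 a natural number, and let u : ℝ → ℝ be continuously differentiable with u(0) = 0, such that for all t ≥ 0 with 0 ≤ u(t) ≤ u_max, u'(t) ≤ p₁·(1 - (u(t)/u_max)^γ)·ξ - p₁·p₂·u(t), and for all t with u(t) ≤ 0, u'(t) ≥ -p₁·ξ·(1-(u(t)/u_min)^γ) + p₁·p₂·u(t) where u_min < 0. Then u(t) < u_max for all t ≥ 0. -/

import Mathlib

theorem sat_model_upper_invariance (u_max u_min ξ p₁ p₂ : ℝ) (hmax : 0 < u_max)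
    (hmin : u_min < 0) (hξ : 0 < ξ) (hp₁ : 0 < p₁) (hp₂ : 0 < p₂)
    (γ : ℕ) (hγ : 1 ≤ γ) (u : ℝ → ℝ) (hu : ContDiff ℝ 1 u) (hu0 : u 0 = 0)
    (hup : ∀ t : ℝ, 0 ≤ t → 0 ≤ u t → u t ≤ u_max →
      deriv u t ≤ p₁ * (1 - (u t / u_max) ^ γ) * ξ - p₁ * p₂ * u t)
    (hlo : ∀ t : ℝ, u t ≤ 0 →
      deriv u t ≥ -(p₁ * ξ) * (1 - (u t / u_min) ^ γ) + p₁ * p₂ * u t) :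
    ∀ t : ℝ, 0 ≤ t → u t < u_max := by
  have hcont : Continuous u := hu.continuous
  have hdiff : Differentiable ℝ u := hu.differentiable one_ne_zero
  -- helper: from a point t ≥ 0 with u t ≥ u_max, find a crossing point in [0,t]
  have hivt : ∀ t : ℝ, 0 ≤ t → u_max ≤ u t → ∃ s, (0 ≤ s ∧ s ≤ t) ∧ u s = u_max := by
    intro t ht hle
    have h1 : u_max ∈ Set.Icc (u 0) (u t) := ⟨by rw [hu0]; exact hmax.le, hle⟩
    have := intermediate_value_Icc ht hcont.continuousOn h1
    obtain ⟨s, hs, hsu⟩ := this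
    exact ⟨s, ⟨hs.1, hs.2⟩, hsu⟩
  intro t ht
  by_contra h
  push_neg at h
  set S : Set ℝ := Set.Ici 0 ∩ u ⁻¹' {u_max} with hSdef
  have hSclosed : IsClosed S := isClosed_Ici.inter (isClosed_singleton.preimage hcont)
  have hSne : S.Nonempty := by
    obtain ⟨s, ⟨hs0, _⟩, hsu⟩ := hivt t ht h
    exact ⟨s, hs0, hsu⟩
  have hbdd : BddBelow S := ⟨0, fun x hx => hx.1⟩
  set t₀ := sInf S with ht₀def
  have ht₀mem : t₀ ∈ S := hSclosed.csInf_mem hSne hbdd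
  have ht₀0 : 0 ≤ t₀ := ht₀mem.1
  have ht₀u : u t₀ = u_max := ht₀mem.2
  have ht₀pos : 0 < t₀ := by
    rcases ht₀0.lt_or_eq with h' | h'
    · exact h'
    · exfalso; rw [← h'] at ht₀u; rw [hu0] at ht₀u; linarith
  -- derivative at t₀ is strictly negative
  have hd : deriv u t₀ < 0 := by
    have := hup t₀ ht₀0 (by rw [ht₀u]; exact hmax.le) (le_of_eq ht₀u)
    rw [ht₀u, div_self hmax.ne', one_pow] at this
    have : deriv u t₀ ≤ p₁ * (1 - 1) * ξ - p₁ * p₂ * u_max := this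
    nlinarith [mul_pos (mul_pos hp₁ hp₂) hmax]
  -- negative derivative: find s < t₀, s > 0, with u s > u_max
  have hslope : Filter.Tendsto (slope u t₀) (nhdsWithin t₀ {t₀}ᶜ) (nhds (deriv u t₀)) :=
    hasDerivAt_iff_tendsto_slope.mp (hdiff t₀).hasDerivAt
  have hslope' : ∀ᶠ s in nhdsWithin t₀ (Set.Iio t₀), slope u t₀ s < 0 := by
    have h1 : ∀ᶠ s in nhdsWithin t₀ {t₀}ᶜ, slope u t₀ s < 0 :=
      hslope.eventually (Filter.Tendsto.eventually_lt_const hd Filter.tendsto_id)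
    exact h1.filter_mono (nhdsWithin_mono t₀ (fun x hx => ne_of_lt hx))
  have hpos : ∀ᶠ s in nhdsWithin t₀ (Set.Iio t₀), 0 < s :=
    eventually_nhdsWithin_of_eventually_nhds (eventually_gt_nhds ht₀pos)
  obtain ⟨s, ⟨hs1, hs2⟩, hs3⟩ := ((hslope'.and hpos).and self_mem_nhdsWithin).exists
  have hslt : s < t₀ := hs3
  have husgt : u_max < u s := by
    rw [slope_def_field] at hs1
    have hden : s - t₀ < 0 := by linarith
    have := div_neg_iff.mp hs1
    rcases this with ⟨h1, h2⟩ | ⟨h1, h2⟩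
    · linarith
    · rw [ht₀u] at h1; linarith
  obtain ⟨s', ⟨hs'0, hs's⟩, hs'u⟩ := hivt s hs2.le husgt.le
  have : t₀ ≤ s' := csInf_le hbdd ⟨hs'0, hs'u⟩
  linarith
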